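/- arXiv:1708.00075 — 6 statements merged into one kernel-verified Lean document; each statement's English description precedes it below -/
import Mathlib

section
/- Let K ⊆ ℝⁿ be a compact convex nonempty set, η > 0, and let f : ℝⁿ → ℝ be differentiable with a β-Lipschitz gradient (β-smooth). Then there exists a point x* ∈ K such that ∇_{K,η} f(x*) = 0, i.e., the (K,η)-projected gradient of f vanishes at x*. -/
/-
A minimiser `x` of `f` on the compact set `K` exists. By first-order optimality on the convex
set `K`, `⟪∇f x, w - x⟫ ≥ 0` for all `w ∈ K`, which is exactly the variational inequality
saying that `x` is the nearest point of `K` to `x - η ∇f x`. Hence the projection step does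
not move `x`, and the projected gradient vanishes there.
-/

open RealInnerProductSpace InnerProductSpace

open Classical in
noncomputable def projOn {E : Type*} [NormedAddCommGroup E] [InnerProductSpace ℝ E]
    (K : Set E) (u : E) : E :=
  if h : ∃ v, v ∈ K ∧ ∀ w ∈ K, ‖u - v‖ ≤ ‖u - w‖ then h.choose else u

noncomputable def projGrad {E : Type*} [NormedAddCommGroup E] [InnerProductSpace ℝ E]
    [CompleteSpace E] (K : Set E) (η : ℝ) (f : E → ℝ) (x : E) : E :=
  (1 / η) • (x - projOn K (x - η • gradient f x))

section

variable {E : Type*} [NormedAddCommGroup E] [InnerProductSpace ℝ E]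

theorem norm_sub_sq_add_norm_sub_sq_le_of_inner_nonpos {u v w : E}
    (h : ⟪u - v, w - v⟫_ℝ ≤ 0) : ‖u - v‖ ^ 2 + ‖w - v‖ ^ 2 ≤ ‖u - w‖ ^ 2 := by
  have hexpand : u - w = (u - v) - (w - v) := by abel
  rw [hexpand, norm_sub_sq_real (u - v) (w - v)]
  linarith

theorem projOn_eq_of_inner_nonpos {K : Set E} {u v : E} (hv : v ∈ K)
    (h : ∀ w ∈ K, ⟪u - v, w - v⟫_ℝ ≤ 0) : projOn K u = v := by
  have hnearest : ∃ v, v ∈ K ∧ ∀ w ∈ K, ‖u - v‖ ≤ ‖u - w‖ := by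
    refine ⟨v, hv, fun w hw => ?_⟩
    have hsq := norm_sub_sq_add_norm_sub_sq_le_of_inner_nonpos (h w hw)
    exact (sq_le_sq₀ (norm_nonneg _) (norm_nonneg _)).mp (by linarith [sq_nonneg ‖w - v‖])
  rw [projOn, dif_pos hnearest]
  obtain ⟨hv'K, hv'min⟩ := hnearest.choose_spec
  set v' := hnearest.choose
  -- `‖u - v‖² + ‖v' - v‖² ≤ ‖u - v'‖² ≤ ‖u - v‖²`
  have hsq := norm_sub_sq_add_norm_sub_sq_le_of_inner_nonpos (h _ hv'K)
  have hle := pow_le_pow_left₀ (norm_nonneg _) (hv'min v hv) 2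
  have hdist : ‖v' - v‖ ^ 2 = 0 := le_antisymm (by linarith) (sq_nonneg _)
  simpa [sub_eq_zero] using hdist

variable [CompleteSpace E]

theorem IsMinOn.inner_gradient_sub_nonneg {K : Set E} {f : E → ℝ} {x : E}
    (hK : Convex ℝ K) (hx : x ∈ K) (hmin : IsMinOn f K x) (hf : DifferentiableAt ℝ f x)
    {w : E} (hw : w ∈ K) : 0 ≤ ⟪gradient f x, w - x⟫_ℝ := by
  have htangent : w - x ∈ posTangentConeAt K x :=
    sub_mem_posTangentConeAt_of_segment_subset (hK.segment_subset hx hw)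
  have hderiv : HasFDerivAt f (toDualMap ℝ E (gradient f x)) x :=
    hasGradientAt_iff_hasFDerivAt.mp hf.hasGradientAt
  simpa using hmin.localize.hasFDerivWithinAt_nonneg hderiv.hasFDerivWithinAt htangent

theorem projGrad_eq_zero_of_isMinOn {K : Set E} {f : E → ℝ} {x : E} {η : ℝ}
    (hK : Convex ℝ K) (hx : x ∈ K) (hmin : IsMinOn f K x) (hf : DifferentiableAt ℝ f x)
    (hη : 0 ≤ η) : projGrad K η f x = 0 := by
  have hproj : projOn K (x - η • gradient f x) = x := by
    refine projOn_eq_of_inner_nonpos hx fun w hw => ?_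
    have hfirst := hmin.inner_gradient_sub_nonneg hK hx hf hw
    rw [sub_sub_cancel_left, inner_neg_left, real_inner_smul_left, neg_nonpos]
    exact mul_nonneg hη hfirst
  rw [projGrad, hproj, sub_self, smul_zero]

end

theorem exists_projGrad_eq_zero_general {n : ℕ} (K : Set (EuclideanSpace ℝ (Fin n)))
    (hKcomp : IsCompact K) (hKconv : Convex ℝ K) (hKne : K.Nonempty)
    (η : ℝ) (hη : 0 < η) (f : EuclideanSpace ℝ (Fin n) → ℝ)
    (hdiff : Differentiable ℝ f) :
    ∃ x ∈ K, projGrad K η f x = 0 := by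
  obtain ⟨x, hxK, hxmin⟩ := hKcomp.exists_isMinOn hKne hdiff.continuous.continuousOn
  exact ⟨x, hxK, projGrad_eq_zero_of_isMinOn hKconv hxK hxmin (hdiff x) hη.le⟩

/-- If `K ⊆ ℝⁿ` is a compact convex nonempty set, `η > 0`, and
`f` is differentiable with a `β`-Lipschitz gradient, then there is a point of `K`
at which the `(K,η)`-projected gradient of `f` vanishes. -/
theorem exists_projGrad_eq_zero {n : ℕ} (K : Set (EuclideanSpace ℝ (Fin n)))
    (hKcomp : IsCompact K) (hKconv : Convex ℝ K) (hKne : K.Nonempty)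
    (η : ℝ) (hη : 0 < η) (f : EuclideanSpace ℝ (Fin n) → ℝ) (β : ℝ)
    (hdiff : Differentiable ℝ f)
    (hsmooth : ∀ x y, ‖gradient f x - gradient f y‖ ≤ β * ‖x - y‖) :
    ∃ x ∈ K, projGrad K η f x = 0 :=
  exists_projGrad_eq_zero_general K hKcomp hKconv hKne η hη f hdiff
end

section
/- Let K ⊆ ℝⁿ be a closed convex nonempty set, let x ∈ K, let f, g : ℝⁿ → ℝ be differentiable, and let η > 0. Then ‖∇_{K,η}[f + g](x)‖ ≤ ‖∇_{K,η} f(x)‖ + ‖∇g(x)‖. -/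
open RealInnerProductSpace

section aux

variable {E : Type*} [NormedAddCommGroup E] [InnerProductSpace ℝ E] [CompleteSpace E]

open Classical in
lemma projOn_spec {K : Set E} (hKcl : IsClosed K) (hKconv : Convex ℝ K)
    (hKne : K.Nonempty) (u : E) :
    projOn K u ∈ K ∧ ∀ w ∈ K, ⟪u - projOn K u, w - projOn K u⟫ ≤ 0 := by
  obtain ⟨v, hv, hvmin⟩ := exists_norm_eq_iInf_of_complete_convex hKne
    hKcl.isComplete hKconv u
  have : Nonempty K := hKne.to_subtype
  have hbdd : BddBelow (Set.range fun w : K => ‖u - w‖) :=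
    ⟨0, Set.forall_mem_range.2 fun _ => norm_nonneg _⟩
  have hex : ∃ p, p ∈ K ∧ ∀ w ∈ K, ‖u - p‖ ≤ ‖u - w‖ := by
    refine ⟨v, hv, fun w hw => ?_⟩
    rw [hvmin]
    exact ciInf_le hbdd ⟨w, hw⟩
  have hproj : projOn K u = hex.choose := by
    rw [projOn, dif_pos hex]
  obtain ⟨hpK, hpmin⟩ := hex.choose_spec
  rw [hproj]
  refine ⟨hpK, ?_⟩
  rw [← norm_eq_iInf_iff_real_inner_le_zero hKconv hpK]
  refine le_antisymm (le_ciInf fun w => hpmin w w.2) (ciInf_le hbdd ⟨_, hpK⟩)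

lemma projOn_nonexpansive {K : Set E} (hKcl : IsClosed K) (hKconv : Convex ℝ K)
    (hKne : K.Nonempty) (a b : E) :
    ‖projOn K a - projOn K b‖ ≤ ‖a - b‖ := by
  obtain ⟨hpa, ha⟩ := projOn_spec hKcl hKconv hKne a
  obtain ⟨hpb, hb⟩ := projOn_spec hKcl hKconv hKne b
  set p := projOn K a
  set q := projOn K b
  have h1 : ⟪a - p, q - p⟫ ≤ 0 := ha q hpb
  have h2 : ⟪b - q, p - q⟫ ≤ 0 := hb p hpa
  have key : ‖p - q‖ ^ 2 ≤ ⟪a - b, p - q⟫ := by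
    have : ⟪(a - b) - (p - q), p - q⟫ ≥ 0 := by
      have := neg_nonneg.2 h1
      have h2' := neg_nonneg.2 h2
      rw [show (a - b) - (p - q) = (a - p) - (b - q) by abel, inner_sub_left]
      have e1 : ⟪a - p, p - q⟫ = -⟪a - p, q - p⟫ := by
        rw [show p - q = -(q - p) by abel, inner_neg_right]
      linarith
    rw [inner_sub_left, real_inner_self_eq_norm_sq] at this
    linarith
  have h3 : ⟪a - b, p - q⟫ ≤ ‖a - b‖ * ‖p - q‖ := real_inner_le_norm _ _
  nlinarith [norm_nonneg (p - q), norm_nonneg (a - b), sq_nonneg (‖a-b‖ - ‖p-q‖)]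

end aux

/-- For a closed convex nonempty `K`, `x ∈ K`, differentiable
`f, g` and `η > 0`, one has
`‖∇_{K,η}[f+g](x)‖ ≤ ‖∇_{K,η} f(x)‖ + ‖∇g(x)‖`. -/
theorem norm_projGrad_add_le {n : ℕ} (K : Set (EuclideanSpace ℝ (Fin n)))
    (hKcl : IsClosed K) (hKconv : Convex ℝ K) (hKne : K.Nonempty)
    (x : EuclideanSpace ℝ (Fin n)) (hx : x ∈ K)
    (f g : EuclideanSpace ℝ (Fin n) → ℝ)
    (hf : Differentiable ℝ f) (hg : Differentiable ℝ g)
    (η : ℝ) (hη : 0 < η) :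
    ‖projGrad K η (fun y => f y + g y) x‖ ≤ ‖projGrad K η f x‖ + ‖gradient g x‖ := by
  have hgrad : gradient (fun y => f y + g y) x = gradient f x + gradient g x := by
    have hf' := (hf x).hasGradientAt
    have hg' := (hg x).hasGradientAt
    have : HasGradientAt (fun y => f y + g y) (gradient f x + gradient g x) x := by
      rw [hasGradientAt_iff_hasFDerivAt] at hf' hg' ⊢
      rw [map_add]
      exact hf'.add hg'
    exact this.gradient
  set a := x - η • gradient f x
  set b := x - η • gradient (fun y => f y + g y) x
  have hab : a - b = η • gradient g x := by
    simp only [a, b, hgrad, smul_add]; abel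
  have hne : ‖projOn K a - projOn K b‖ ≤ η * ‖gradient g x‖ := by
    calc ‖projOn K a - projOn K b‖ ≤ ‖a - b‖ := projOn_nonexpansive hKcl hKconv hKne a b
    _ = η * ‖gradient g x‖ := by rw [hab, norm_smul, Real.norm_eq_abs, abs_of_pos hη]
  have key : ‖x - projOn K b‖ ≤ ‖x - projOn K a‖ + η * ‖gradient g x‖ := by
    calc ‖x - projOn K b‖ = ‖(x - projOn K a) + (projOn K a - projOn K b)‖ := by abel_nf
    _ ≤ ‖x - projOn K a‖ + ‖projOn K a - projOn K b‖ := norm_add_le _ _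
    _ ≤ _ := by linarith
  unfold projGrad
  rw [norm_smul, norm_smul, Real.norm_eq_abs, abs_of_pos (by positivity : (0:ℝ) < 1/η)]
  rw [div_mul_eq_mul_div, div_mul_eq_mul_div, one_mul, one_mul]
  rw [div_add' _ _ _ (ne_of_gt hη), div_le_div_iff_of_pos_right hη]
  calc ‖x - projOn K b‖ ≤ ‖x - projOn K a‖ + η * ‖gradient g x‖ := key
  _ = ‖x - projOn K a‖ + ‖gradient g x‖ * η := by ring
end

section
/- Let K = [−1,1] ⊆ ℝ, let T ≥ 1, let 1 ≤ w ≤ T, and let 0 < η ≤ 1. There exists a probability distribution D over sequences (f_1, …, f_T) of affine functions on K, each bounded by 1 in absolute value and with constant derivative (0-smooth), such that for every deterministic online algorithm — i.e., every sequence of maps where x_t ∈ K is determined by (f_1, …, f_{t−1}) — the expected w-local regret satisfies E_D[ Σ_{t=1}^T |∇_{K,η} F_{t,w}(x_t)|² ] ≥ (1/(4w)) · ⌊T/(2w)⌋. -/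
open RealInnerProductSpace

/- The sliding-window time average `F_{t,w}(x) = (1/w) ∑_{i=0}^{w-1} f_{t-i}(x)`,
where natural-number subtraction together with `f 0 = 0` encodes the convention
that `f_t ≡ 0` for `t ≤ 0`. -/
noncomputable def Favg {E : Type*} (f : ℕ → E → ℝ) (w t : ℕ) (x : E) : ℝ :=
  (1 / (w : ℝ)) * ∑ i ∈ Finset.range w, f (t - i) x

/- The affine loss function of round `s` (1-indexed) determined by the
coefficient pair `c ⟨s−1⟩ = (slope, intercept)`, i.e. `f_s(x) = a_s x + b_s`;
rounds `s = 0` (standing for `t ≤ 0`) and `s > T` have zero loss.  Affine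
functions are exactly the `0`-smooth ones (constant derivative). -/
def lossAt (T : ℕ) (c : Fin T → ℝ × ℝ) (s : ℕ) : ℝ → ℝ :=
  if h : 1 ≤ s ∧ s ≤ T then
    fun x => (c ⟨s - 1, by omega⟩).1 * x + (c ⟨s - 1, by omega⟩).2
  else fun _ => 0

/-! Cut the rounds into `⌊T/(2w)⌋` blocks of length `2w`. In the second half of each block every
other round gets the loss `ε x` for an independent uniform sign `ε`, and the next round gets
`-ε x`; all other losses vanish. At a signal round `t` the window average then telescopes to
`F_{t,w}(x) = ε_t x / w`, where `ε_t` is independent of everything the algorithm has seen. Whatever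
`x_t ∈ [-1, 1]` is, for one of the two signs the step `x_t - η ∇F_{t,w}(x_t)` stays in `[-1, 1]`,
so the squared projected gradient averages at least `1 / (2w²)` over the sign. Each block has
`⌈w/2⌉` signal rounds, which gives `⌊T/(2w)⌋ / (4w)`. -/

open Finset Function MeasureTheory

section Pairing

variable {Ω β : Type*} [Fintype Ω] [AddCommMonoid β] [PartialOrder β] [IsOrderedAddMonoid β]

theorem card_nsmul_le_two_nsmul_sum_of_involutive {σ : Ω → Ω} (hσ : Involutive σ) (F : Ω → β)
    {a : β} (h : ∀ ω, a ≤ F ω + F (σ ω)) : Fintype.card Ω • a ≤ 2 • ∑ ω, F ω :=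
  calc Fintype.card Ω • a ≤ ∑ ω, (F ω + F (σ ω)) := card_nsmul_le_sum _ _ _ fun ω _ => h ω
    _ = 2 • ∑ ω, F ω := by
      rw [sum_add_distrib, show ∑ ω, F (σ ω) = ∑ ω, F ω from Equiv.sum_comp (hσ.toPerm σ) F,
        two_nsmul]

end Pairing

section UniformLaw

variable {Ω α : Type*} [Fintype Ω] [MeasurableSpace α]

/-- The law of `g ω` for `ω` uniform on `Ω`, as a sum of Dirac masses rather than a pushforward
so that integrals of non-measurable functions (such as the regret of an arbitrary algorithm) can
be computed. -/
noncomputable def uniformLaw (g : Ω → α) : Measure α :=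
  (Fintype.card Ω : ENNReal)⁻¹ • Measure.sum fun ω => Measure.dirac (g ω)

instance [Nonempty Ω] (g : Ω → α) : IsProbabilityMeasure (uniformLaw g) := by
  constructor
  simp [uniformLaw, ENNReal.inv_mul_cancel]

theorem ae_uniformLaw [MeasurableSingletonClass α] {g : Ω → α} {p : α → Prop}
    (h : ∀ ω, p (g ω)) : ∀ᵐ a ∂uniformLaw g, p a := by
  refine Measure.ae_smul_measure (Measure.ae_sum_iff.2 fun ω => ?_) _
  rw [ae_dirac_eq]
  exact h ω

theorem lintegral_uniformLaw [MeasurableSingletonClass α] (g : Ω → α) (f : α → ENNReal) :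
    ∫⁻ a, f a ∂uniformLaw g = (Fintype.card Ω : ENNReal)⁻¹ * ∑ ω, f (g ω) := by
  rw [uniformLaw, lintegral_smul_measure, lintegral_sum_measure, tsum_fintype, smul_eq_mul]
  simp_rw [lintegral_dirac]

theorem lintegral_ofReal_uniformLaw [MeasurableSingletonClass α] [Nonempty Ω] (g : Ω → α)
    {f : α → ℝ} (hf : ∀ a, 0 ≤ f a) :
    ∫⁻ a, ENNReal.ofReal (f a) ∂uniformLaw g =
      ENNReal.ofReal ((Fintype.card Ω : ℝ)⁻¹ * ∑ ω, f (g ω)) := by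
  rw [lintegral_uniformLaw, ENNReal.ofReal_mul (by positivity), ENNReal.ofReal_inv_of_pos
    (by exact_mod_cast Fintype.card_pos), ENNReal.ofReal_natCast,
    ENNReal.ofReal_sum_of_nonneg fun ω _ => hf (g ω)]

end UniformLaw

section ProjectedGradient

variable {E : Type*} [NormedAddCommGroup E] [InnerProductSpace ℝ E]

theorem projOn_of_mem {K : Set E} {u : E} (hu : u ∈ K) : projOn K u = u := by
  have h : ∃ v, v ∈ K ∧ ∀ w ∈ K, ‖u - v‖ ≤ ‖u - w‖ := ⟨u, hu, fun w _ => by simp⟩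
  rw [projOn, dif_pos h]
  have := h.choose_spec.2 u hu
  rw [sub_self, norm_zero, norm_le_zero_iff, sub_eq_zero] at this
  exact this.symm

theorem projGrad_eq_gradient [CompleteSpace E] {K : Set E} {η : ℝ} (hη : η ≠ 0) {f : E → ℝ}
    {x : E} (h : x - η • gradient f x ∈ K) : projGrad K η f x = gradient f x := by
  rw [projGrad, projOn_of_mem h, sub_sub_cancel, smul_smul, one_div, inv_mul_cancel₀ hη, one_smul]

end ProjectedGradient

theorem gradient_const_mul (g x : ℝ) : gradient (fun y => g * y) x = g := by
  simpa using ((hasDerivAt_id x).const_mul g).hasGradientAt'.gradient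

/-- Whatever the point `x ∈ [-1, 1]`, one of the two steps `x ∓ η g` stays in `[-1, 1]`, so
for one of the slopes `±g` the projected gradient is the plain gradient. -/
theorem sq_le_norm_projGrad_sq_add_norm_projGrad_neg_sq {η g x : ℝ} (hη : 0 < η)
    (hg : η * |g| ≤ 1) (hx : x ∈ Set.Icc (-1 : ℝ) 1) :
    g ^ 2 ≤ ‖projGrad (Set.Icc (-1 : ℝ) 1) η (fun y => g * y) x‖ ^ 2 +
      ‖projGrad (Set.Icc (-1 : ℝ) 1) η (fun y => -g * y) x‖ ^ 2 := by
  have hstep : x - η • g ∈ Set.Icc (-1 : ℝ) 1 ∨ x - η • -g ∈ Set.Icc (-1 : ℝ) 1 := by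
    simp only [smul_eq_mul, Set.mem_Icc] at hx ⊢
    rcases le_total 0 g with h | h
    · rw [abs_of_nonneg h] at hg
      rcases le_total 0 x with h' | h' <;> [left; right] <;> constructor <;> nlinarith
    · rw [abs_of_nonpos h] at hg
      rcases le_total 0 x with h' | h' <;> [right; left] <;> constructor <;> nlinarith
  rcases hstep with h | h
  · rw [← gradient_const_mul g x] at h
    rw [projGrad_eq_gradient hη.ne' h, gradient_const_mul, Real.norm_eq_abs g, sq_abs]
    exact le_add_of_nonneg_right (sq_nonneg _)
  · rw [← gradient_const_mul (-g) x] at h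
    rw [projGrad_eq_gradient hη.ne' h, gradient_const_mul, norm_neg, Real.norm_eq_abs g, sq_abs]
    exact le_add_of_nonneg_left (sq_nonneg _)

theorem lossAt_eq_mul {T : ℕ} {a : ℕ → ℝ} (ha0 : a 0 = 0) (haT : ∀ t, T < t → a t = 0) :
    lossAt T (fun i => (a (i + 1), 0)) = fun t x => a t * x := by
  funext t x
  rw [lossAt]
  split_ifs with h
  · simp [Nat.sub_add_cancel h.1]
  · rcases Nat.eq_zero_or_pos t with rfl | ht
    · simp [ha0]
    · simp [haT t (by omega)]

theorem Favg_mul (a : ℕ → ℝ) (w t : ℕ) :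
    Favg (fun t x => a t * x) w t = fun x => (∑ i ∈ range w, a (t - i)) / w * x := by
  funext x
  rw [Favg, ← sum_mul]
  ring

theorem sum_range_sub_sub_one {G : Type*} [AddCommGroup G] (g : ℕ → G) (t w : ℕ) :
    ∑ i ∈ range w, (g (t - i) - g (t - i - 1)) = g t - g (t - w) := by
  simpa [Nat.sub_sub] using sum_range_sub' (fun i => g (t - i)) w

/-- The signal rounds of block `j < M` are `2wj + w + 2k` for `2k < w`. -/
def signalRounds (w M : ℕ) : Set ℕ :=
  {t | w ≤ t % (2 * w) ∧ t % 2 = w % 2 ∧ t < 2 * w * M}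

section SignalRounds

variable {w M t : ℕ}

theorem one_le_of_mem_signalRounds (ht : t ∈ signalRounds w M) : 1 ≤ t :=
  Nat.pos_of_ne_zero fun h => by subst h; simp [signalRounds] at ht; omega

theorem pos_of_mem_signalRounds (ht : t ∈ signalRounds w M) : 0 < w :=
  Nat.pos_of_ne_zero fun h => by simpa [h] using ht.2.2

theorem sub_one_notMem_signalRounds (ht : t ∈ signalRounds w M) : t - 1 ∉ signalRounds w M :=
  fun h => by have := one_le_of_mem_signalRounds ht; have := ht.2.1; have := h.2.1; omega

theorem sub_notMem_signalRounds (ht : t ∈ signalRounds w M) : t - w ∉ signalRounds w M := by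
  rintro ⟨h, -, -⟩
  have hw := pos_of_mem_signalRounds ht
  have hmid := ht.1
  have hlt := Nat.mod_lt t (show 0 < 2 * w by omega)
  have : t - w = 2 * w * (t / (2 * w)) + (t % (2 * w) - w) := by
    have := Nat.div_add_mod t (2 * w); omega
  rw [this, Nat.mul_add_mod, Nat.mod_eq_of_lt (by omega)] at h
  omega

theorem mem_signalRounds_of_lt {j k : ℕ} (hj : j < M) (hk : 2 * k < w) :
    2 * w * j + w + 2 * k ∈ signalRounds w M := by
  have hjM : 2 * w * (j + 1) ≤ 2 * w * M := Nat.mul_le_mul_left _ hj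
  refine ⟨?_, ?_, by rw [mul_add] at hjM; omega⟩
  · rw [add_assoc, Nat.mul_add_mod, Nat.mod_eq_of_lt (by omega)]
    omega
  · rw [mul_assoc]; omega

end SignalRounds

/-- Written as a difference so that window sums telescope. -/
noncomputable def hardSlope (w M : ℕ) (ε : ℕ → ℝ) (t : ℕ) : ℝ :=
  (signalRounds w M).indicator ε t - (signalRounds w M).indicator ε (t - 1)

section HardSlope

variable {w M : ℕ} {ε : ℕ → ℝ}

theorem abs_hardSlope_le (hε : ∀ t, |ε t| ≤ 1) (t : ℕ) : |hardSlope w M ε t| ≤ 1 := by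
  have hind : ∀ r, |(signalRounds w M).indicator ε r| ≤ 1 := fun r => by
    by_cases hr : r ∈ signalRounds w M <;> simp [hr, hε]
  by_cases ht : t ∈ signalRounds w M
  · simpa [hardSlope, Set.indicator_of_notMem (sub_one_notMem_signalRounds ht)] using hind t
  · simpa [hardSlope, Set.indicator_of_notMem ht] using hind (t - 1)

theorem hardSlope_congr {ε' : ℕ → ℝ} {t : ℕ} (h₁ : ε t = ε' t) (h₂ : ε (t - 1) = ε' (t - 1)) :
    hardSlope w M ε t = hardSlope w M ε' t := by
  simp only [hardSlope, Set.indicator, h₁, h₂]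

theorem hardSlope_eq_zero_of_lt {t : ℕ} (ht : 2 * w * M < t) : hardSlope w M ε t = 0 := by
  have hnot : ∀ r, 2 * w * M ≤ r → r ∉ signalRounds w M := fun r hr h => by
    have := h.2.2; omega
  simp [hardSlope, Set.indicator_of_notMem (hnot t ht.le),
    Set.indicator_of_notMem (hnot (t - 1) (by omega))]

theorem sum_range_hardSlope {t : ℕ} (ht : t ∈ signalRounds w M) :
    ∑ i ∈ range w, hardSlope w M ε (t - i) = ε t := by
  simp only [hardSlope]
  rw [sum_range_sub_sub_one,
    Set.indicator_of_mem ht, Set.indicator_of_notMem (sub_notMem_signalRounds ht), sub_zero]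

end HardSlope

noncomputable def roundSign {T : ℕ} (s : Fin T → Bool) (t : ℕ) : ℝ :=
  if h : 1 ≤ t ∧ t ≤ T then (if s ⟨t - 1, by omega⟩ then 1 else -1) else 0

section RoundSign

variable {T : ℕ} (s : Fin T → Bool)

theorem abs_roundSign_le (t : ℕ) : |roundSign s t| ≤ 1 := by
  unfold roundSign; split_ifs <;> simp

theorem abs_roundSign {t : ℕ} (h₁ : 1 ≤ t) (h₂ : t ≤ T) : |roundSign s t| = 1 := by
  unfold roundSign; split_ifs <;> simp_all

theorem roundSign_update_not (i : Fin T) :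
    roundSign (update s i (!s i)) (i + 1) = -roundSign s (i + 1) := by
  have h : 1 ≤ (i : ℕ) + 1 ∧ (i : ℕ) + 1 ≤ T := ⟨by omega, i.isLt⟩
  simp only [roundSign, dif_pos h, Nat.add_sub_cancel, Fin.eta, update_self]
  cases s i <;> simp

theorem roundSign_update_of_ne (i : Fin T) (b : Bool) {t : ℕ} (ht : t ≠ i + 1) :
    roundSign (update s i b) t = roundSign s t := by
  unfold roundSign
  by_cases h : 1 ≤ t ∧ t ≤ T
  · rw [dif_pos h, dif_pos h, update_of_ne (by simp [Fin.ext_iff]; omega)]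
  · rw [dif_neg h, dif_neg h]

end RoundSign

noncomputable def hardCoeffs (T w M : ℕ) (s : Fin T → Bool) : Fin T → ℝ × ℝ :=
  fun i => (hardSlope w M (roundSign s) (i + 1), 0)

section HardCoeffs

variable {T w M : ℕ} (s : Fin T → Bool)

theorem hardCoeffs_update_of_lt {i j : Fin T} (b : Bool) (h : j < i) :
    hardCoeffs T w M (update s i b) j = hardCoeffs T w M s j := by
  have h' : (j : ℕ) < i := h
  simp only [hardCoeffs, hardSlope_congr (roundSign_update_of_ne s i b (t := j + 1) (by omega))
    (roundSign_update_of_ne s i b (by omega))]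

theorem Favg_lossAt_hardCoeffs (hM : 2 * w * M ≤ T) {t : ℕ} (ht : t ∈ signalRounds w M) :
    Favg (lossAt T (hardCoeffs T w M s)) w t = fun x => roundSign s t / w * x := by
  unfold hardCoeffs
  rw [lossAt_eq_mul (a := hardSlope w M (roundSign s)) (by simp [hardSlope])
    fun r hr => hardSlope_eq_zero_of_lt (by omega), Favg_mul, sum_range_hardSlope ht]

theorem abs_hardCoeffs_le (i : Fin T) {x : ℝ} (hx : x ∈ Set.Icc (-1 : ℝ) 1) :
    |(hardCoeffs T w M s i).1 * x + (hardCoeffs T w M s i).2| ≤ 1 := by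
  simp only [hardCoeffs, add_zero, abs_mul]
  exact mul_le_one₀ (abs_hardSlope_le (abs_roundSign_le s) _) (abs_nonneg x) (abs_le.2 hx)

end HardCoeffs

section Adversary

variable {T w M : ℕ} {η : ℝ} {alg : ℕ → (Fin T → ℝ × ℝ) → ℝ}

/-- Flipping the sign of a signal round `t` leaves the play `alg t` unchanged but negates the
slope of `F_{t,w}`. -/
theorem card_mul_le_two_mul_sum_sq_norm_projGrad (hM : 2 * w * M ≤ T) (hη0 : 0 < η)
    (hη1 : η ≤ 1) (hK : ∀ t c, alg t c ∈ Set.Icc (-1 : ℝ) 1)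
    (hcausal : ∀ t (c c' : Fin T → ℝ × ℝ), (∀ s : Fin T, (s : ℕ) + 1 < t → c s = c' s) →
      alg t c = alg t c')
    {t : ℕ} (ht : t ∈ signalRounds w M) :
    Fintype.card (Fin T → Bool) * (1 / w : ℝ) ^ 2 ≤
      2 * ∑ s, ‖projGrad (Set.Icc (-1 : ℝ) 1) η (Favg (lossAt T (hardCoeffs T w M s)) w t)
        (alg t (hardCoeffs T w M s))‖ ^ 2 := by
  have h₁ := one_le_of_mem_signalRounds ht
  have hw := pos_of_mem_signalRounds ht
  have htT : t ≤ T := by have := ht.2.2; omega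
  set i : Fin T := ⟨t - 1, by omega⟩
  have hi : (i : ℕ) + 1 = t := by simp only [i]; omega
  set σ : (Fin T → Bool) → (Fin T → Bool) := fun s => update s i (!s i)
  have hσ : Involutive σ := fun s => by simp [σ]
  have hpair : ∀ s, (1 / w : ℝ) ^ 2 ≤
      ‖projGrad (Set.Icc (-1 : ℝ) 1) η (Favg (lossAt T (hardCoeffs T w M s)) w t)
        (alg t (hardCoeffs T w M s))‖ ^ 2 +
      ‖projGrad (Set.Icc (-1 : ℝ) 1) η (Favg (lossAt T (hardCoeffs T w M (σ s))) w t)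
        (alg t (hardCoeffs T w M (σ s)))‖ ^ 2 := by
    intro s
    have hplay : alg t (hardCoeffs T w M (σ s)) = alg t (hardCoeffs T w M s) :=
      hcausal t _ _ fun j hj => hardCoeffs_update_of_lt s _ (Fin.lt_def.2 (by omega))
    have hg : |roundSign s t / w| = 1 / w := by
      rw [abs_div, abs_roundSign s h₁ htT, Nat.abs_cast]
    have hηg : η * |roundSign s t / w| ≤ 1 := by
      rw [hg, mul_one_div]
      exact div_le_one_of_le₀ (hη1.trans (by exact_mod_cast hw)) (Nat.cast_nonneg w)
    rw [Favg_lossAt_hardCoeffs _ hM ht, Favg_lossAt_hardCoeffs _ hM ht, hplay, ← hi,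
      roundSign_update_not, hi, neg_div, ← hg, sq_abs]
    exact sq_le_norm_projGrad_sq_add_norm_projGrad_neg_sq hη0 hηg (hK _ _)
  simpa [nsmul_eq_mul] using card_nsmul_le_two_nsmul_sum_of_involutive hσ _ hpair

end Adversary

theorem nsmul_le_sum_Icc_of_signalRounds {T w M : ℕ} (hM : 2 * w * M ≤ T) {h : ℕ → ℝ} {c : ℝ}
    (h0 : ∀ t, 0 ≤ h t) (hc : ∀ t ∈ signalRounds w M, c ≤ h t) :
    (M * ((w + 1) / 2)) • c ≤ ∑ t ∈ Icc 1 T, h t := by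
  classical
  set P := range M ×ˢ range ((w + 1) / 2)
  set φ : ℕ × ℕ → ℕ := fun p => 2 * w * p.1 + w + 2 * p.2
  have hφ : ∀ p ∈ P, φ p ∈ signalRounds w M := fun p hp => by
    simp only [P, mem_product, mem_range] at hp
    exact mem_signalRounds_of_lt hp.1 (by omega)
  have hdivmod : ∀ p ∈ P, φ p / (2 * w) = p.1 ∧ φ p % (2 * w) = w + 2 * p.2 := fun p hp => by
    simp only [P, mem_product, mem_range] at hp
    have hlt : w + 2 * p.2 < 2 * w := by omega
    simp only [φ, add_assoc, Nat.mul_add_div (show 0 < 2 * w by omega), Nat.mul_add_mod,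
      Nat.div_eq_of_lt hlt, Nat.mod_eq_of_lt hlt, add_zero, and_self]
  have hinj : Set.InjOn φ P := fun p hp q hq e => by
    obtain ⟨hp₁, hp₂⟩ := hdivmod p hp
    obtain ⟨hq₁, hq₂⟩ := hdivmod q hq
    rw [e] at hp₁ hp₂
    exact Prod.ext (hp₁.symm.trans hq₁) (by omega)
  have hsub : P.image φ ⊆ Icc 1 T := fun t ht => by
    obtain ⟨p, hp, rfl⟩ := mem_image.1 ht
    have := (hφ p hp).2.2
    exact mem_Icc.2 ⟨one_le_of_mem_signalRounds (hφ p hp), by omega⟩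
  calc (M * ((w + 1) / 2)) • c = ∑ _p ∈ P, c := by simp [P, card_product]
    _ ≤ ∑ p ∈ P, h (φ p) := sum_le_sum fun p hp => hc _ (hφ p hp)
    _ = ∑ t ∈ P.image φ, h t := (sum_image hinj).symm
    _ ≤ ∑ t ∈ Icc 1 T, h t := sum_le_sum_of_subset_of_nonneg hsub fun t _ _ => h0 t

theorem one_div_four_mul_le (w : ℕ) : 1 / (4 * w : ℝ) ≤ ((w + 1) / 2 : ℕ) * (1 / w) ^ 2 / 2 := by
  rcases Nat.eq_zero_or_pos w with rfl | hw
  · simp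
  have h2J : (w : ℝ) ≤ 2 * ((w + 1) / 2 : ℕ) := by exact_mod_cast (by omega : w ≤ 2 * ((w + 1) / 2))
  have hw' : (0 : ℝ) < w := by exact_mod_cast hw
  rw [div_le_iff₀ (by positivity)]
  field_simp
  linarith

theorem card_mul_le_sum_sum_sq_norm_projGrad {T w : ℕ} {η : ℝ} (hη0 : 0 < η) (hη1 : η ≤ 1)
    {alg : ℕ → (Fin T → ℝ × ℝ) → ℝ} (hK : ∀ t c, alg t c ∈ Set.Icc (-1 : ℝ) 1)
    (hcausal : ∀ t (c c' : Fin T → ℝ × ℝ), (∀ s : Fin T, (s : ℕ) + 1 < t → c s = c' s) →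
      alg t c = alg t c') :
    Fintype.card (Fin T → Bool) * (1 / (4 * w) * (T / (2 * w) : ℕ) : ℝ) ≤
      ∑ s, ∑ t ∈ Icc 1 T, ‖projGrad (Set.Icc (-1 : ℝ) 1) η
        (Favg (lossAt T (hardCoeffs T w (T / (2 * w)) s)) w t)
        (alg t (hardCoeffs T w (T / (2 * w)) s))‖ ^ 2 := by
  set M := T / (2 * w)
  set N : ℝ := (Fintype.card (Fin T → Bool) : ℝ)
  have hM : 2 * w * M ≤ T := Nat.mul_div_le T (2 * w)
  have hsignals := nsmul_le_sum_Icc_of_signalRounds hM (c := N * (1 / w) ^ 2 / 2)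
    (h := fun t => ∑ s, ‖projGrad (Set.Icc (-1 : ℝ) 1) η
      (Favg (lossAt T (hardCoeffs T w M s)) w t) (alg t (hardCoeffs T w M s))‖ ^ 2)
    (fun t => sum_nonneg fun s _ => by positivity) fun t ht => by
      linarith [card_mul_le_two_mul_sum_sq_norm_projGrad hM hη0 hη1 hK hcausal ht]
  rw [sum_comm]
  refine le_trans ?_ hsignals
  rw [nsmul_eq_mul]
  push_cast
  nlinarith [one_div_four_mul_le w, (by positivity : (0 : ℝ) ≤ N * M)]

theorem local_regret_lower_bound_general (T w : ℕ) (η : ℝ) (hη0 : 0 < η) (hη1 : η ≤ 1) :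
    ∃ μ : MeasureTheory.Measure (Fin T → ℝ × ℝ),
      MeasureTheory.IsProbabilityMeasure μ ∧
      (∀ᵐ c ∂μ, ∀ s : Fin T, ∀ x ∈ Set.Icc (-1 : ℝ) 1, |(c s).1 * x + (c s).2| ≤ 1) ∧
      ∀ alg : ℕ → (Fin T → ℝ × ℝ) → ℝ,
        (∀ t c, alg t c ∈ Set.Icc (-1 : ℝ) 1) →
        (∀ t (c c' : Fin T → ℝ × ℝ), (∀ s : Fin T, (s : ℕ) + 1 < t → c s = c' s) →
          alg t c = alg t c') →
        ENNReal.ofReal ((1 / (4 * (w : ℝ))) * ((T / (2 * w) : ℕ) : ℝ)) ≤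
          ∫⁻ c, ENNReal.ofReal (∑ t ∈ Finset.Icc 1 T,
            ‖projGrad (Set.Icc (-1 : ℝ) 1) η (Favg (lossAt T c) w t) (alg t c)‖ ^ 2) ∂μ := by
  refine ⟨uniformLaw (hardCoeffs T w (T / (2 * w))), inferInstance,
    ae_uniformLaw fun s i x hx => abs_hardCoeffs_le s i hx, fun alg hK hcausal => ?_⟩
  rw [lintegral_ofReal_uniformLaw _ fun c => sum_nonneg fun t _ => by positivity]
  refine ENNReal.ofReal_le_ofReal ?_
  rw [← div_eq_inv_mul, le_div_iff₀' (by positivity)]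
  exact card_mul_le_sum_sum_sq_norm_projGrad hη0 hη1 hK hcausal

/-- A lower bound for local regret: on `K = [−1,1]`, for any
`T ≥ 1`, `1 ≤ w ≤ T` and `0 < η ≤ 1`, there is a probability distribution over
sequences of affine (hence `0`-smooth) loss functions, each bounded by `1` in
absolute value on `K`, such that every deterministic online algorithm (whose
play `x_t ∈ K` depends only on the losses of rounds `< t`) suffers expected
`w`-local regret at least `(1/(4w)) ⌊T/(2w)⌋`. -/
theorem local_regret_lower_bound (T w : ℕ) (hT : 1 ≤ T) (hw1 : 1 ≤ w) (hwT : w ≤ T)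
    (η : ℝ) (hη0 : 0 < η) (hη1 : η ≤ 1) :
    ∃ μ : MeasureTheory.Measure (Fin T → ℝ × ℝ),
      MeasureTheory.IsProbabilityMeasure μ ∧
      (∀ᵐ c ∂μ, ∀ s : Fin T, ∀ x ∈ Set.Icc (-1 : ℝ) 1, |(c s).1 * x + (c s).2| ≤ 1) ∧
      ∀ alg : ℕ → (Fin T → ℝ × ℝ) → ℝ,
        (∀ t c, alg t c ∈ Set.Icc (-1 : ℝ) 1) →
        (∀ t (c c' : Fin T → ℝ × ℝ), (∀ s : Fin T, (s : ℕ) + 1 < t → c s = c' s) →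
          alg t c = alg t c') →
        ENNReal.ofReal ((1 / (4 * (w : ℝ))) * ((T / (2 * w) : ℕ) : ℝ)) ≤
          ∫⁻ c, ENNReal.ofReal (∑ t ∈ Finset.Icc 1 T,
            ‖projGrad (Set.Icc (-1 : ℝ) 1) η (Favg (lossAt T c) w t) (alg t c)‖ ^ 2) ∂μ :=
  local_regret_lower_bound_general T w η hη0 hη1
end

section
/- Let K ⊆ ℝⁿ be a closed convex nonempty set, η > 0, 1 ≤ w ≤ T, and let f_1, …, f_T : ℝⁿ → ℝ be differentiable and L-Lipschitz (so ‖∇f_t(x)‖ ≤ L on K), with f_t ≡ 0 for t ≤ 0. Suppose the iterates x_1, …, x_T ∈ K satisfy ‖∇_{K,η} F_{t−1,w}(x_t)‖ ≤ δ/w for every 1 ≤ t ≤ T (where F_{0,w} ≡ 0, so this holds vacuously at t = 1). Then the w-local regret satisfies R_w(T) = Σ_{t=1}^T ‖∇_{K,η} F_{t,w}(x_t)‖² ≤ (δ + 2L)² · T / w². -/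
/-! The projection onto a closed convex set is nonexpansive, so `∇_{K,η}` is 1-Lipschitz as a
function of the gradient. Consecutive window averages telescope:
`∇F_{t,w} - ∇F_{t-1,w} = (∇f_t - ∇f_{t-w}) / w`, which has norm at most `2L / w`. Hence
`‖∇_{K,η} F_{t,w}(x_t)‖ ≤ ‖∇_{K,η} F_{t-1,w}(x_t)‖ + 2L/w ≤ (δ + 2L)/w`; square and sum over `t`. -/

open RealInnerProductSpace

section Projection

variable {E : Type*} [NormedAddCommGroup E] [InnerProductSpace ℝ E] [CompleteSpace E]
  {K : Set E}

theorem projOn_mem_and_norm_sub_eq_iInf (hKcl : IsClosed K) (hKconv : Convex ℝ K)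
    (hKne : K.Nonempty) (u : E) :
    projOn K u ∈ K ∧ ‖u - projOn K u‖ = ⨅ w : K, ‖u - w‖ := by
  have : Nonempty K := hKne.to_subtype
  have hbdd : BddBelow (Set.range fun w : K => ‖u - w‖) :=
    ⟨0, Set.forall_mem_range.2 fun _ => norm_nonneg _⟩
  have hmin : ∃ v, v ∈ K ∧ ∀ w ∈ K, ‖u - v‖ ≤ ‖u - w‖ := by
    obtain ⟨v, hvK, hv⟩ := exists_norm_eq_iInf_of_complete_convex hKne hKcl.isComplete hKconv u
    exact ⟨v, hvK, fun w hw => hv ▸ ciInf_le hbdd ⟨w, hw⟩⟩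
  rw [projOn, dif_pos hmin]
  obtain ⟨hmem, hle⟩ := hmin.choose_spec
  exact ⟨hmem, le_antisymm (le_ciInf fun w => hle w w.2) (ciInf_le hbdd ⟨_, hmem⟩)⟩

theorem inner_sub_projOn_le_zero (hKcl : IsClosed K) (hKconv : Convex ℝ K) (hKne : K.Nonempty)
    (u : E) {w : E} (hw : w ∈ K) : ⟪u - projOn K u, w - projOn K u⟫ ≤ 0 :=
  let h := projOn_mem_and_norm_sub_eq_iInf hKcl hKconv hKne u
  (norm_eq_iInf_iff_real_inner_le_zero hKconv h.1).1 h.2 w hw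

theorem norm_projOn_sub_projOn_le (hKcl : IsClosed K) (hKconv : Convex ℝ K) (hKne : K.Nonempty)
    (u v : E) : ‖projOn K u - projOn K v‖ ≤ ‖u - v‖ := by
  set p := projOn K u
  set q := projOn K v
  have hp : ⟪u - p, q - p⟫ ≤ 0 := inner_sub_projOn_le_zero hKcl hKconv hKne u
    (projOn_mem_and_norm_sub_eq_iInf hKcl hKconv hKne v).1
  have hq : ⟪v - q, p - q⟫ ≤ 0 := inner_sub_projOn_le_zero hKcl hKconv hKne v
    (projOn_mem_and_norm_sub_eq_iInf hKcl hKconv hKne u).1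
  rw [← neg_sub p q, inner_neg_right, neg_nonpos] at hp
  have hsplit : ⟪u - v, p - q⟫ = ⟪u - p, p - q⟫ - ⟪v - q, p - q⟫ + ‖p - q‖ ^ 2 := by
    rw [← real_inner_self_eq_norm_sq, ← inner_sub_left, ← inner_add_left]
    congr 1
    abel
  have hfirm : ‖p - q‖ ^ 2 ≤ ‖u - v‖ * ‖p - q‖ :=
    calc ‖p - q‖ ^ 2 ≤ ⟪u - v, p - q⟫ := by linarith
      _ ≤ ‖u - v‖ * ‖p - q‖ := real_inner_le_norm _ _
  nlinarith [norm_nonneg (p - q), norm_nonneg (u - v)]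

theorem norm_projGrad_sub_projGrad_le (hKcl : IsClosed K) (hKconv : Convex ℝ K)
    (hKne : K.Nonempty) (η : ℝ) (g h : E → ℝ) (x : E) :
    ‖projGrad K η g x - projGrad K η h x‖ ≤ ‖gradient g x - gradient h x‖ := by
  have hsub : projGrad K η g x - projGrad K η h x =
      (1 / η) • (projOn K (x - η • gradient h x) - projOn K (x - η • gradient g x)) := by
    simp only [projGrad, ← smul_sub]
    congr 1
    abel
  have harg : (x - η • gradient h x) - (x - η • gradient g x) =
      η • (gradient g x - gradient h x) := by
    rw [smul_sub]
    abel
  calc ‖projGrad K η g x - projGrad K η h x‖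
      = |η|⁻¹ * ‖projOn K (x - η • gradient h x) - projOn K (x - η • gradient g x)‖ := by
        rw [hsub, norm_smul, one_div, norm_inv, Real.norm_eq_abs]
    _ ≤ |η|⁻¹ * ‖(x - η • gradient h x) - (x - η • gradient g x)‖ := by
        gcongr
        exact norm_projOn_sub_projOn_le hKcl hKconv hKne _ _
    _ = |η|⁻¹ * |η| * ‖gradient g x - gradient h x‖ := by
        rw [harg, norm_smul, Real.norm_eq_abs, mul_assoc]
    _ ≤ ‖gradient g x - gradient h x‖ := mul_le_of_le_one_left (norm_nonneg _) inv_mul_le_one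

end Projection

theorem nonneg_of_abs_sub_le_mul_norm {E : Type*} [NormedAddCommGroup E] [Nontrivial E]
    {f : E → ℝ} {L : ℝ} (hf : ∀ x y, |f x - f y| ≤ L * ‖x - y‖) : 0 ≤ L := by
  obtain ⟨x, hx⟩ := exists_ne (0 : E)
  have h := (abs_nonneg _).trans (hf x 0)
  rw [sub_zero] at h
  exact nonneg_of_mul_nonneg_left h (norm_pos_iff.2 hx)

section Gradient

variable {E : Type*} [NormedAddCommGroup E] [InnerProductSpace ℝ E] [CompleteSpace E]

theorem norm_gradient_le_of_abs_sub_le [Nontrivial E] {f : E → ℝ} {L : ℝ}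
    (hf : ∀ x y, |f x - f y| ≤ L * ‖x - y‖) (x : E) : ‖gradient f x‖ ≤ L := by
  rw [gradient, LinearIsometryEquiv.norm_map]
  exact norm_fderiv_le_of_lip' ℝ (nonneg_of_abs_sub_le_mul_norm hf)
    (Filter.Eventually.of_forall fun y => hf y x)

variable {f : ℕ → E → ℝ}

theorem gradient_Favg (hdiff : ∀ t, Differentiable ℝ (f t)) (w t : ℕ) (x : E) :
    gradient (Favg f w t) x = (1 / (w : ℝ)) • ∑ i ∈ Finset.range w, gradient (f (t - i)) x := by
  have hd : ∀ i ∈ Finset.range w, DifferentiableAt ℝ (f (t - i)) x :=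
    fun i _ => (hdiff (t - i)).differentiableAt
  unfold Favg gradient
  rw [fderiv_const_mul (DifferentiableAt.fun_sum hd), fderiv_fun_sum hd, map_smul, map_sum]

theorem gradient_Favg_sub_gradient_Favg_pred (hdiff : ∀ t, Differentiable ℝ (f t))
    (w t : ℕ) (x : E) :
    gradient (Favg f w t) x - gradient (Favg f w (t - 1)) x =
      (1 / (w : ℝ)) • (gradient (f t) x - gradient (f (t - w)) x) := by
  rw [gradient_Favg hdiff, gradient_Favg hdiff, ← smul_sub, ← Finset.sum_sub_distrib]
  congr 1
  simpa only [Nat.sub_sub, add_comm 1, Nat.sub_zero] using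
    Finset.sum_range_sub' (fun i => gradient (f (t - i)) x) w

theorem norm_gradient_Favg_sub_gradient_Favg_pred_le (hdiff : ∀ t, Differentiable ℝ (f t))
    {L : ℝ} (hgrad : ∀ t y, ‖gradient (f t) y‖ ≤ L) (w t : ℕ) (x : E) :
    ‖gradient (Favg f w t) x - gradient (Favg f w (t - 1)) x‖ ≤ 2 * L / w := by
  rw [gradient_Favg_sub_gradient_Favg_pred hdiff, norm_smul, Real.norm_of_nonneg (by positivity)]
  calc 1 / (w : ℝ) * ‖gradient (f t) x - gradient (f (t - w)) x‖
      ≤ 1 / (w : ℝ) * (L + L) :=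
        mul_le_mul_of_nonneg_left ((norm_sub_le _ _).trans (add_le_add (hgrad _ _) (hgrad _ _)))
          (by positivity)
    _ = 2 * L / w := by ring

end Gradient

theorem norm_projGrad_Favg_le {E : Type*} [NormedAddCommGroup E] [InnerProductSpace ℝ E]
    [CompleteSpace E] [Nontrivial E] {K : Set E} (hKcl : IsClosed K) (hKconv : Convex ℝ K)
    (hKne : K.Nonempty) (η : ℝ) {f : ℕ → E → ℝ} {L δ : ℝ}
    (hdiff : ∀ t, Differentiable ℝ (f t)) (hLip : ∀ t x y, |f t x - f t y| ≤ L * ‖x - y‖)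
    {w t : ℕ} {x : E} (hprev : ‖projGrad K η (Favg f w (t - 1)) x‖ ≤ δ / w) :
    ‖projGrad K η (Favg f w t) x‖ ≤ (δ + 2 * L) / w :=
  calc ‖projGrad K η (Favg f w t) x‖
      ≤ ‖projGrad K η (Favg f w (t - 1)) x‖ +
          ‖projGrad K η (Favg f w t) x - projGrad K η (Favg f w (t - 1)) x‖ :=
        norm_le_insert' _ _
    _ ≤ δ / w + 2 * L / w :=
        add_le_add hprev <| (norm_projGrad_sub_projGrad_le hKcl hKconv hKne η _ _ x).trans <|
          norm_gradient_Favg_sub_gradient_Favg_pred_le hdiff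
            (fun t => norm_gradient_le_of_abs_sub_le (hLip t)) w t x
    _ = (δ + 2 * L) / w := by ring

theorem local_regret_le_general {n : ℕ} (K : Set (EuclideanSpace ℝ (Fin n)))
    (hKcl : IsClosed K) (hKconv : Convex ℝ K) (hKne : K.Nonempty)
    (η : ℝ) (T w : ℕ)
    (f : ℕ → EuclideanSpace ℝ (Fin n) → ℝ) (L δ : ℝ)
    (hdiff : ∀ t, Differentiable ℝ (f t))
    (hLip : ∀ t x y, |f t x - f t y| ≤ L * ‖x - y‖)
    (x : ℕ → EuclideanSpace ℝ (Fin n))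
    (hplay : ∀ t, 1 ≤ t → t ≤ T → ‖projGrad K η (Favg f w (t - 1)) (x t)‖ ≤ δ / w) :
    ∑ t ∈ Finset.Icc 1 T, ‖projGrad K η (Favg f w t) (x t)‖ ^ 2 ≤
      (δ + 2 * L) ^ 2 * T / w ^ 2 := by
  have hstep : ∀ t ∈ Finset.Icc 1 T,
      ‖projGrad K η (Favg f w t) (x t)‖ ^ 2 ≤ ((δ + 2 * L) / w) ^ 2 := by
    intro t ht
    rcases subsingleton_or_nontrivial (EuclideanSpace ℝ (Fin n)) with hE | hE
    · rw [Subsingleton.elim (projGrad K η (Favg f w t) (x t)) 0, norm_zero, zero_pow two_ne_zero]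
      positivity
    · obtain ⟨ht1, htT⟩ := Finset.mem_Icc.1 ht
      exact pow_le_pow_left₀ (norm_nonneg _)
        (norm_projGrad_Favg_le hKcl hKconv hKne η hdiff hLip (hplay t ht1 htT)) 2
  calc ∑ t ∈ Finset.Icc 1 T, ‖projGrad K η (Favg f w t) (x t)‖ ^ 2
      ≤ ∑ t ∈ Finset.Icc 1 T, ((δ + 2 * L) / w) ^ 2 := Finset.sum_le_sum hstep
    _ = (δ + 2 * L) ^ 2 * T / w ^ 2 := by
        rw [Finset.sum_const, Nat.card_Icc, nsmul_eq_mul, add_tsub_cancel_right]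
        ring

/-- Local-regret bound for time-smoothed online gradient
descent: if each `f_t` (for `1 ≤ t ≤ T`) is differentiable and `L`-Lipschitz,
`f_t ≡ 0` for `t ≤ 0`, and the iterates satisfy
`‖∇_{K,η} F_{t−1,w}(x_t)‖ ≤ δ/w` for all `1 ≤ t ≤ T`, then
`∑_{t=1}^T ‖∇_{K,η} F_{t,w}(x_t)‖² ≤ (δ + 2L)² T / w²`. -/
theorem local_regret_le {n : ℕ} (K : Set (EuclideanSpace ℝ (Fin n)))
    (hKcl : IsClosed K) (hKconv : Convex ℝ K) (hKne : K.Nonempty)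
    (η : ℝ) (hη : 0 < η) (T w : ℕ) (hw : 1 ≤ w) (hwT : w ≤ T)
    (f : ℕ → EuclideanSpace ℝ (Fin n) → ℝ) (L δ : ℝ)
    (hf0 : f 0 = fun _ => 0)
    (hdiff : ∀ t, Differentiable ℝ (f t))
    (hLip : ∀ t x y, |f t x - f t y| ≤ L * ‖x - y‖)
    (x : ℕ → EuclideanSpace ℝ (Fin n))
    (hxK : ∀ t, 1 ≤ t → t ≤ T → x t ∈ K)
    (hplay : ∀ t, 1 ≤ t → t ≤ T → ‖projGrad K η (Favg f w (t - 1)) (x t)‖ ≤ δ / w) :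
    ∑ t ∈ Finset.Icc 1 T, ‖projGrad K η (Favg f w t) (x t)‖ ^ 2 ≤
      (δ + 2 * L) ^ 2 * T / w ^ 2 :=
  local_regret_le_general K hKcl hKconv hKne η T w f L δ hdiff hLip x hplay
end

section
/- Let F : ℝⁿ → ℝ be twice differentiable with an L₂-Lipschitz Hessian (L₂ > 0). Let z ∈ ℝⁿ, g := ∇F(z), H := ∇²F(z), and suppose λ < 0 is the minimum eigenvalue of the symmetric matrix H with corresponding unit eigenvector v (Hv = λv, ‖v‖ = 1). Let s ∈ {−1, +1} be chosen so that ⟨g, s·(2λ/L₂)v⟩ ≤ 0, and set u := s·(2λ/L₂)v. Then F(z + u) − F(z) ≤ 2λ³/(3L₂²). (Note that the right-hand side is negative since λ < 0.) -/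
open RealInnerProductSpace

/-!
Along the segment `t ↦ z + t • u` the Lipschitz bound on the Hessian gives
`‖∇F(z + t u) - ∇F(z) - t ∇²F(z) u‖ ≤ L₂ t² ‖u‖² / 2`, and integrating once more yields the
cubic upper model `F(z + u) ≤ F(z) + ⟨∇F(z), u⟩ + ½ ⟨u, ∇²F(z) u⟩ + L₂ ‖u‖³ / 6`.
For `u = ± (2λ/L₂) v` the linear term is `≤ 0` by the choice of sign, the quadratic term is
`λ ‖u‖² / 2 = 2λ³/L₂²` and the cubic term is `-4λ³/(3L₂²)`, which sum to `2λ³/(3L₂²)`.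
-/

section Taylor

variable {E : Type*} [NormedAddCommGroup E]

theorem hasDerivAt_const_add_smul [NormedSpace ℝ E] (z u : E) (t : ℝ) :
    HasDerivAt (fun t : ℝ => z + t • u) u t := by
  simpa using ((hasDerivAt_id t).smul_const u).const_add z

theorem norm_sub_sub_fderiv_le_of_lipschitz_fderiv [NormedSpace ℝ E]
    {F : Type*} [NormedAddCommGroup F] [NormedSpace ℝ F] {G : E → F} {L : ℝ}
    (hG : Differentiable ℝ G) (hG' : ∀ x y, ‖fderiv ℝ G x - fderiv ℝ G y‖ ≤ L * ‖x - y‖)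
    (z u : E) :
    ‖G (z + u) - G z - fderiv ℝ G z u‖ ≤ L / 2 * ‖u‖ ^ 2 := by
  set H := fderiv ℝ G z
  have hderiv : ∀ t : ℝ, HasDerivAt (fun t : ℝ => G (z + t • u) - G z - t • H u)
      (fderiv ℝ G (z + t • u) u - H u) t := fun t =>
    (((hG _).hasFDerivAt.comp_hasDerivAt t (hasDerivAt_const_add_smul z u t)).sub_const
      (G z)).sub ((hasDerivAt_id t).smul_const (H u)) |>.congr_deriv (by simp)
  have hbound : ∀ t : ℝ, HasDerivAt (fun t : ℝ => L / 2 * ‖u‖ ^ 2 * t ^ 2)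
      (L * ‖u‖ ^ 2 * t) t := fun t =>
    ((hasDerivAt_pow 2 t).const_mul (L / 2 * ‖u‖ ^ 2)).congr_deriv (by ring)
  have hderiv_le : ∀ t ∈ Set.Ico (0 : ℝ) 1,
      ‖fderiv ℝ G (z + t • u) u - H u‖ ≤ L * ‖u‖ ^ 2 * t := fun t ht =>
    calc ‖fderiv ℝ G (z + t • u) u - H u‖
        = ‖(fderiv ℝ G (z + t • u) - H) u‖ := rfl
      _ ≤ ‖fderiv ℝ G (z + t • u) - H‖ * ‖u‖ := ContinuousLinearMap.le_opNorm _ _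
      _ ≤ L * ‖z + t • u - z‖ * ‖u‖ := by gcongr; exact hG' _ _
      _ = L * ‖u‖ ^ 2 * t := by
        rw [add_sub_cancel_left, norm_smul, Real.norm_of_nonneg ht.1]; ring
  simpa using image_norm_le_of_norm_deriv_right_le_deriv_boundary
    (fun t _ => (hderiv t).continuousAt.continuousWithinAt)
    (fun t _ => (hderiv t).hasDerivWithinAt) (by simp) hbound hderiv_le
    (Set.right_mem_Icc.2 zero_le_one)

theorem le_add_inner_gradient_add_cubic_of_lipschitz_hessian [InnerProductSpace ℝ E]
    [CompleteSpace E] {F : E → ℝ} {L : ℝ} (hF : Differentiable ℝ F)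
    (hF' : Differentiable ℝ (gradient F))
    (hHess : ∀ x y, ‖fderiv ℝ (gradient F) x - fderiv ℝ (gradient F) y‖ ≤ L * ‖x - y‖)
    (z u : E) :
    F (z + u) ≤ F z + ⟪gradient F z, u⟫ + 1 / 2 * ⟪u, fderiv ℝ (gradient F) z u⟫
      + L / 6 * ‖u‖ ^ 3 := by
  set H := fderiv ℝ (gradient F) z
  set f : ℝ → ℝ := fun t => F (z + t • u) - F z - t * ⟪gradient F z, u⟫ - t ^ 2 / 2 * ⟪u, H u⟫
  have hderiv : ∀ t : ℝ, HasDerivAt f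
      (⟪gradient F (z + t • u) - gradient F z - H (t • u), u⟫) t := by
    intro t
    have hline := ((hF _).hasGradientAt.hasFDerivAt).comp_hasDerivAt t
      (hasDerivAt_const_add_smul z u t)
    refine ((((hline.sub_const (F z)).sub ((hasDerivAt_id t).mul_const _)).sub
      (((hasDerivAt_pow 2 t).div_const 2).mul_const _))).congr_deriv ?_
    simp only [InnerProductSpace.toDual_apply_apply, map_smul, inner_sub_left,
      real_inner_smul_left, real_inner_comm u (H u)]
    push_cast
    ring
  have hbound : ∀ t : ℝ, HasDerivAt (fun t : ℝ => L / 6 * ‖u‖ ^ 3 * t ^ 3)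
      (L / 2 * ‖u‖ ^ 3 * t ^ 2) t := fun t =>
    ((hasDerivAt_pow 3 t).const_mul (L / 6 * ‖u‖ ^ 3)).congr_deriv (by push_cast; ring)
  have hderiv_le : ∀ t ∈ Set.Ico (0 : ℝ) 1,
      ⟪gradient F (z + t • u) - gradient F z - H (t • u), u⟫ ≤ L / 2 * ‖u‖ ^ 3 * t ^ 2 :=
    fun t ht =>
    calc ⟪gradient F (z + t • u) - gradient F z - H (t • u), u⟫
        ≤ ‖gradient F (z + t • u) - gradient F z - H (t • u)‖ * ‖u‖ := real_inner_le_norm _ _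
      _ ≤ L / 2 * ‖t • u‖ ^ 2 * ‖u‖ := by
        gcongr; exact norm_sub_sub_fderiv_le_of_lipschitz_fderiv hF' hHess z (t • u)
      _ = L / 2 * ‖u‖ ^ 3 * t ^ 2 := by
        rw [norm_smul, Real.norm_of_nonneg ht.1]; ring
  have h1 := image_le_of_deriv_right_le_deriv_boundary
    (fun t _ => (hderiv t).continuousAt.continuousWithinAt)
    (fun t _ => (hderiv t).hasDerivWithinAt) (by simp [f])
    (fun t _ => (hbound t).continuousAt.continuousWithinAt)
    (fun t _ => (hbound t).hasDerivWithinAt) hderiv_le (Set.right_mem_Icc.2 zero_le_one)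
  simp only [f, one_smul, one_mul, one_pow, mul_one] at h1
  linarith

end Taylor

theorem second_order_step_general {n : ℕ} (F : EuclideanSpace ℝ (Fin n) → ℝ)
    (L₂ : ℝ) (hL₂ : 0 < L₂)
    (hF : Differentiable ℝ F) (hF' : Differentiable ℝ (gradient F))
    (hHess : ∀ x y, ‖fderiv ℝ (gradient F) x - fderiv ℝ (gradient F) y‖ ≤ L₂ * ‖x - y‖)
    (z v : EuclideanSpace ℝ (Fin n)) (lam : ℝ) (hlam : lam < 0) (hv : ‖v‖ = 1)
    (heig : fderiv ℝ (gradient F) z v = lam • v)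
    (s : ℝ) (hs : s = -1 ∨ s = 1)
    (hsign : ⟪gradient F z, s • ((2 * lam / L₂) • v)⟫ ≤ 0) :
    F (z + s • ((2 * lam / L₂) • v)) - F z ≤ 2 * lam ^ 3 / (3 * L₂ ^ 2) := by
  set u := s • ((2 * lam / L₂) • v)
  have hnorm : ‖u‖ = -(2 * lam) / L₂ := by
    have hs_abs : |s| = 1 := by rcases hs with rfl | rfl <;> norm_num
    rw [norm_smul, norm_smul, hv, Real.norm_eq_abs, hs_abs, Real.norm_of_nonpos
      (div_nonpos_of_nonpos_of_nonneg (by linarith) hL₂.le), neg_div]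
    ring
  have hquad : ⟪u, fderiv ℝ (gradient F) z u⟫ = lam * ‖u‖ ^ 2 := by
    rw [map_smul, map_smul, heig, smul_comm _ lam, smul_comm s lam, real_inner_smul_right,
      real_inner_self_eq_norm_sq]
  have htaylor := le_add_inner_gradient_add_cubic_of_lipschitz_hessian hF hF' hHess z u
  rw [hquad, hnorm] at htaylor
  have hmodel : lam * (-(2 * lam) / L₂) ^ 2 / 2 + L₂ / 6 * (-(2 * lam) / L₂) ^ 3
      = 2 * lam ^ 3 / (3 * L₂ ^ 2) := by
    field_simp
    ring
  linarith

/-- Progress of a negative-curvature step: if `F` is twice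
differentiable with `L₂`-Lipschitz Hessian, `λ < 0` is the minimum eigenvalue of
the Hessian `H = ∇²F(z)` with unit eigenvector `v`, and `s ∈ {−1, +1}` is chosen
so that `⟨∇F(z), s (2λ/L₂) v⟩ ≤ 0`, then for `u = s (2λ/L₂) v`:
`F(z + u) − F(z) ≤ 2λ³/(3L₂²)`. -/
theorem second_order_step {n : ℕ} (F : EuclideanSpace ℝ (Fin n) → ℝ)
    (L₂ : ℝ) (hL₂ : 0 < L₂)
    (hF : Differentiable ℝ F) (hF' : Differentiable ℝ (gradient F))
    (hHess : ∀ x y, ‖fderiv ℝ (gradient F) x - fderiv ℝ (gradient F) y‖ ≤ L₂ * ‖x - y‖)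
    (z v : EuclideanSpace ℝ (Fin n)) (lam : ℝ) (hlam : lam < 0) (hv : ‖v‖ = 1)
    (heig : fderiv ℝ (gradient F) z v = lam • v)
    (hmin : ∀ (μ : ℝ) (u : EuclideanSpace ℝ (Fin n)),
      u ≠ 0 → fderiv ℝ (gradient F) z u = μ • u → lam ≤ μ)
    (s : ℝ) (hs : s = -1 ∨ s = 1)
    (hsign : ⟪gradient F z, s • ((2 * lam / L₂) • v)⟫ ≤ 0) :
    F (z + s • ((2 * lam / L₂) • v)) - F z ≤ 2 * lam ^ 3 / (3 * L₂ ^ 2) :=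
  second_order_step_general F L₂ hL₂ hF hF' hHess z v lam hlam hv heig s hs hsign
end

section
/- Consider a k-player iterated game with convex decision sets K_1, …, K_k ⊆ ℝⁿ and differentiable payoff functions f_i : K_1 × ⋯ × K_k → ℝ. Fix η > 0 and 1 ≤ w < T, and let (x_t^1, …, x_t^k) for t = 1, …, T be the joint strategies produced when each player i runs an online algorithm on the loss sequence f_{i,t}(x) := −f_i(x_t^1, …, x_t^{i−1}, x, x_t^{i+1}, …, x_t^k), achieving w-local regret Σ_{t=1}^T ‖∇_{K_i,η} F_{t,w}^i(x_t^i)‖² ≤ R_i, where F_{t,w}^i(x) := (1/w) Σ_{j=0}^{w−1} f_{i,t−j}(x). Then there exists t with w ≤ t ≤ T such that for every player i ∈ [k], ‖∇_{K_i,η} F_{t,w}^i(x_t^i)‖ ≤ sqrt( (Σ_{i=1}^k R_i) / (T − w) ); that is, (x_t^1, …, x_t^k) is an ε-approximate (η, w)-smoothed local equilibrium with ε = sqrt(Σ_i R_i / (T − w)). -/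
open RealInnerProductSpace

/- The online loss shown to player `i` at round `t ≥ 1` of the iterated game:
`f_{i,t}(y) = −f_i(x_t¹, …, x_t^{i−1}, y, x_t^{i+1}, …, x_t^k)` (and `0` for
`t = 0`, encoding `f_{i,t} ≡ 0` for `t ≤ 0`). -/
noncomputable def gameLoss {n k : ℕ}
    (f : Fin k → (Fin k → EuclideanSpace ℝ (Fin n)) → ℝ)
    (x : ℕ → Fin k → EuclideanSpace ℝ (Fin n)) (i : Fin k) (t : ℕ) :
    EuclideanSpace ℝ (Fin n) → ℝ :=
  if t = 0 then fun _ => 0 else fun y => -(f i (Function.update (x t) i y))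

/-! Summed over the players, the local-regret bounds control the total
`∑_{w < t ≤ T} ∑ᵢ ‖∇_{Kᵢ,η} F^i_{t,w}(x_t^i)‖²` by `∑ᵢ Rᵢ`, so one of these `T − w` rounds
is at most the average `∑ᵢ Rᵢ / (T − w)`, and at that round each player's term is too. -/

open Finset

theorem Finset.exists_le_div_card_of_sum_le {α 𝕜 : Type*} [Field 𝕜] [LinearOrder 𝕜]
    [IsStrictOrderedRing 𝕜] {s : Finset α} (hs : s.Nonempty) {g : α → 𝕜} {S : 𝕜}
    (h : ∑ a ∈ s, g a ≤ S) : ∃ a ∈ s, g a ≤ S / #s := by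
  apply exists_le_of_sum_le hs
  rwa [sum_const, nsmul_eq_mul, mul_div_cancel₀ _ (Nat.cast_ne_zero.2 hs.card_pos.ne')]

theorem exists_mem_Ioc_forall_norm_le_sqrt {ι E : Type*} [Fintype ι] [SeminormedAddCommGroup E]
    (a : ι → ℕ → E) {T w : ℕ} (hwT : w < T) (R : ι → ℝ)
    (hR : ∀ i, ∑ t ∈ Icc 1 T, ‖a i t‖ ^ 2 ≤ R i) :
    ∃ t ∈ Ioc w T, ∀ i, ‖a i t‖ ≤ √((∑ i, R i) / ((T : ℝ) - w)) := by
  have hsum : ∑ t ∈ Ioc w T, ∑ i, ‖a i t‖ ^ 2 ≤ ∑ i, R i :=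
    calc ∑ t ∈ Ioc w T, ∑ i, ‖a i t‖ ^ 2 ≤ ∑ t ∈ Icc 1 T, ∑ i, ‖a i t‖ ^ 2 := by
          refine sum_le_sum_of_subset_of_nonneg (fun t ht => ?_) fun t _ _ => by positivity
          simp only [mem_Ioc, mem_Icc] at ht ⊢
          omega
      _ = ∑ i, ∑ t ∈ Icc 1 T, ‖a i t‖ ^ 2 := sum_comm
      _ ≤ ∑ i, R i := sum_le_sum fun i _ => hR i
  obtain ⟨t, ht, hle⟩ := exists_le_div_card_of_sum_le (nonempty_Ioc.2 hwT) hsum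
  rw [Nat.card_Ioc, Nat.cast_sub hwT.le] at hle
  exact ⟨t, ht, fun i => Real.le_sqrt_of_sq_le <|
    (single_le_sum (fun j _ => sq_nonneg ‖a j t‖) (mem_univ i)).trans hle⟩

theorem smoothed_local_equilibrium_general {n k : ℕ}
    (K : Fin k → Set (EuclideanSpace ℝ (Fin n)))
    (f : Fin k → (Fin k → EuclideanSpace ℝ (Fin n)) → ℝ)
    (η : ℝ) (T w : ℕ) (hwT : w < T)
    (x : ℕ → Fin k → EuclideanSpace ℝ (Fin n))
    (R : Fin k → ℝ)
    (hR : ∀ i, ∑ t ∈ Finset.Icc 1 T,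
      ‖projGrad (K i) η (Favg (gameLoss f x i) w t) (x t i)‖ ^ 2 ≤ R i) :
    ∃ t, w ≤ t ∧ t ≤ T ∧ ∀ i,
      ‖projGrad (K i) η (Favg (gameLoss f x i) w t) (x t i)‖ ≤
        Real.sqrt ((∑ i, R i) / ((T : ℝ) - w)) := by
  obtain ⟨t, ht, hbound⟩ := exists_mem_Ioc_forall_norm_le_sqrt
    (fun i t => projGrad (K i) η (Favg (gameLoss f x i) w t) (x t i)) hwT R hR
  rw [mem_Ioc] at ht
  exact ⟨t, ht.1.le, ht.2, hbound⟩

/-- Smoothed local equilibria from local-regret minimization: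
if in a `k`-player iterated game each player `i` attains `w`-local regret at
most `R i` on the losses `f_{i,t}`, then some joint strategy
`(x_t¹, …, x_t^k)` with `w ≤ t ≤ T` is an `ε`-approximate `(η, w)`-smoothed
local equilibrium with `ε = sqrt((∑ i, R i)/(T − w))`. -/
theorem smoothed_local_equilibrium {n k : ℕ}
    (K : Fin k → Set (EuclideanSpace ℝ (Fin n)))
    (hKcl : ∀ i, IsClosed (K i)) (hKconv : ∀ i, Convex ℝ (K i))
    (hKne : ∀ i, (K i).Nonempty)
    (f : Fin k → (Fin k → EuclideanSpace ℝ (Fin n)) → ℝ)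
    (hdiff : ∀ i, Differentiable ℝ (f i))
    (η : ℝ) (hη : 0 < η) (T w : ℕ) (hw : 1 ≤ w) (hwT : w < T)
    (x : ℕ → Fin k → EuclideanSpace ℝ (Fin n))
    (hxK : ∀ t i, 1 ≤ t → t ≤ T → x t i ∈ K i)
    (R : Fin k → ℝ)
    (hR : ∀ i, ∑ t ∈ Finset.Icc 1 T,
      ‖projGrad (K i) η (Favg (gameLoss f x i) w t) (x t i)‖ ^ 2 ≤ R i) :
    ∃ t, w ≤ t ∧ t ≤ T ∧ ∀ i,
      ‖projGrad (K i) η (Favg (gameLoss f x i) w t) (x t i)‖ ≤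
        Real.sqrt ((∑ i, R i) / ((T : ℝ) - w)) :=
  smoothed_local_equilibrium_general K f η T w hwT x R hR
end
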